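/- Let n and d be integers with n ≥ 2d+2 and d ≥ 1, let G = C_n(d+1, d+2, ..., ⌊n/2⌋) and Δ = Ind(G). The following are equivalent: (i) G is S_2; (ii) G is well-covered; (iii) n > 3d or n = 2d+2; (iv) link_Δ(F) is strongly connected for all faces F ∈ Δ with 0 < dim link_Δ(F) ≤ d. -/

import Mathlib

/-- The circulant graph `C_n(S)` on vertex set `ZMod n`: `i` and `j` are adjacent
iff `i ≠ j` and `|i-j| ∈ S` or `n - |i-j| ∈ S` (encoded via `ZMod` subtraction). -/
def circulantGraph (n : ℕ) (S : Set ℕ) : SimpleGraph (ZMod n) where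
  Adj i j := i ≠ j ∧ ((i - j).val ∈ S ∨ (j - i).val ∈ S)
  symm := ⟨fun i j h => ⟨h.1.symm, h.2.symm⟩⟩
  loopless := ⟨fun i h => h.1 rfl⟩

/-- An (abstract) simplicial complex on vertex type `V`, as a downward closed
family of finite subsets of `V`. -/
def IsComplex {V : Type*} (Δ : Set (Finset V)) : Prop :=
  ∀ F ∈ Δ, ∀ G ⊆ F, G ∈ Δ

/-- The link of a face `F` in the complex `Δ`. -/
def linkC {V : Type*} [DecidableEq V] (Δ : Set (Finset V)) (F : Finset V) : Set (Finset V) :=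
  {G | Disjoint G F ∧ G ∪ F ∈ Δ}

/-- A complex is connected if any two of its vertices can be joined by a path
of 1-dimensional faces. -/
def ComplexConnected {V : Type*} [DecidableEq V] (Δ : Set (Finset V)) : Prop :=
  ∀ u, ({u} : Finset V) ∈ Δ → ∀ w, ({w} : Finset V) ∈ Δ →
    Relation.ReflTransGen (fun a b => a ≠ b ∧ ({a, b} : Finset V) ∈ Δ) u w

/-- Serre's condition `S₂` for a simplicial complex: the link of every face of the
complex whose link has dimension at least `1` is connected. -/
def IsS2 {V : Type*} [DecidableEq V] (Δ : Set (Finset V)) : Prop :=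
  ∀ F ∈ Δ, (∃ G ∈ linkC Δ F, 2 ≤ G.card) → ComplexConnected (linkC Δ F)

/-- The independence complex of a graph: faces are the (finite) independent sets. -/
def IndComplex {V : Type*} (G : SimpleGraph V) : Set (Finset V) :=
  {F | ∀ u ∈ F, ∀ v ∈ F, ¬ G.Adj u v}

/-- A graph is `S₂` if its independence complex is `S₂`. -/
def GraphS2 {V : Type*} [DecidableEq V] (G : SimpleGraph V) : Prop :=
  IsS2 (IndComplex G)

/-- The facets (maximal faces) of a complex. -/
def facetsOf {V : Type*} (Δ : Set (Finset V)) : Set (Finset V) :=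
  {F | F ∈ Δ ∧ ∀ G ∈ Δ, F ⊆ G → F = G}

/-- A graph is well-covered if all its maximal independent sets have the same cardinality. -/
def WellCovered {V : Type*} (G : SimpleGraph V) : Prop :=
  ∀ A ∈ facetsOf (IndComplex G), ∀ B ∈ facetsOf (IndComplex G), A.card = B.card

/-- A complex is pure if all its facets have the same cardinality. -/
def IsPure {V : Type*} (Δ : Set (Finset V)) : Prop :=
  ∀ F ∈ facetsOf Δ, ∀ G ∈ facetsOf Δ, F.card = G.card

/-- `L` is a shelling order of `Δ`: a linear order `F₁, …, Fₛ` of all the facets of `Δ`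
such that for all `i < j` there are `v ∈ Fⱼ \ Fᵢ` and `l < j` with `Fⱼ \ F_l = {v}`. -/
def IsShellingOrder {V : Type*} [DecidableEq V] (Δ : Set (Finset V)) (L : List (Finset V)) : Prop :=
  L.Nodup ∧ (∀ F, F ∈ facetsOf Δ ↔ F ∈ L) ∧
    ∀ i j : Fin L.length, i < j →
      ∃ v ∈ L.get j \ L.get i, ∃ l : Fin L.length, l < j ∧ L.get j \ L.get l = {v}

/-- A complex is shellable if its facets admit a shelling order. -/
def IsShellable {V : Type*} [DecidableEq V] (Δ : Set (Finset V)) : Prop :=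
  ∃ L : List (Finset V), IsShellingOrder Δ L

/-- A pure complex is strongly connected if any two facets are joined by a sequence of
facets in which consecutive facets intersect in one element fewer than their cardinality. -/
def StronglyConnectedComplex {V : Type*} [DecidableEq V] (Δ : Set (Finset V)) : Prop :=
  ∀ F ∈ facetsOf Δ, ∀ F' ∈ facetsOf Δ,
    Relation.ReflTransGen
      (fun A B => A ∈ facetsOf Δ ∧ B ∈ facetsOf Δ ∧ (A ∩ B).card = A.card - 1) F F'

/-- The join of two simplicial complexes (on disjoint vertex sets). -/
def joinC {V : Type*} [DecidableEq V] (Δ₁ Δ₂ : Set (Finset V)) : Set (Finset V) :=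
  {F | ∃ F₁ ∈ Δ₁, ∃ F₂ ∈ Δ₂, F = F₁ ∪ F₂}

/-- The generating set of the one-paired circulant graph `C(n; a, b)`. -/
def onePairedSet (n a b : ℕ) : Set ℕ :=
  {d | 1 ≤ d ∧ d ≤ n / 2 ∧ a ∣ d ∧ ¬ (a * b ∣ d)}

/-!
Two vertices of `upperCirculant n d` are non-adjacent exactly when their circular distance is at
most `d`. If `3d < n`, every independent set lies in an arc of `d + 1` consecutive vertices, so
the facets are the arcs; the facets of the link of `F` are the arcs containing `F`, minus `F`,
and these arcs are consecutive rotations of each other, each sharing `d` vertices with the next.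
If `n = 2d + 2`, the graph is the perfect matching `x ~ x + (d + 1)`; a facet picks one end of
every edge, and switching one end at a time joins any two facets of a link. In both cases `Δ` is
pure with strongly connected links, which gives `S₂`.
If `2d + 3 ≤ n ≤ 3d`, the link of `splitFace n d = {0, …, 3d - n} ∪ {d}` is the disjoint union of
the simplex `splitLinkArc n d = {3d - n + 1, …, d - 1}` and the point `2d`: it is neither
connected nor strongly connected, and `splitFace n d ∪ {2d}` is a facet with fewer than `d + 1`
vertices, while the arc `{0, …, d}` lies in a facet with at least `d + 1`.
-/

open Finset Relation

section Complexes

variable {V : Type*} {Δ : Set (Finset V)}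

theorem isComplex_indComplex (G : SimpleGraph V) : IsComplex (IndComplex G) :=
  fun _ hF _ hsub u hu v hv => hF u (hsub hu) v (hsub hv)

theorem exists_mem_facetsOf_superset [Finite V] {F : Finset V}
    (hF : F ∈ Δ) : ∃ K ∈ facetsOf Δ, F ⊆ K := by
  obtain ⟨K, hFK, hK⟩ := Finite.exists_le_maximal (p := (· ∈ Δ)) hF
  exact ⟨K, ⟨hK.prop, fun _ hH hKH => hK.eq_of_le hH hKH⟩, hFK⟩

theorem mem_facetsOf_of_split {P Q : Finset V}
    (hsplit : ∀ H ∈ Δ, H ⊆ P ∨ H ⊆ Q) (hPQ : Disjoint P Q)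
    (hP : P ∈ Δ) (hPne : P.Nonempty) : P ∈ facetsOf Δ := by
  refine ⟨hP, fun H hH hPH => ?_⟩
  rcases hsplit H hH with hHP | hHQ
  · exact hPH.antisymm hHP
  · obtain ⟨x, hx⟩ := hPne
    exact absurd (hPH.trans hHQ hx) (disjoint_left.1 hPQ hx)

variable [DecidableEq V]

def FacetAdj (Δ : Set (Finset V)) (A B : Finset V) : Prop :=
  A ∈ facetsOf Δ ∧ B ∈ facetsOf Δ ∧ (A ∩ B).card = A.card - 1

theorem IsComplex.linkC (hΔ : IsComplex Δ) (F : Finset V) : IsComplex (linkC Δ F) :=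
  fun _ ⟨hdisj, hmem⟩ _ hsub =>
    ⟨disjoint_of_subset_left hsub hdisj, hΔ _ hmem _ (union_subset_union_left hsub)⟩

theorem mem_facetsOf_linkC_iff {F K : Finset V} :
    K ∈ facetsOf (linkC Δ F) ↔ Disjoint K F ∧ K ∪ F ∈ facetsOf Δ := by
  constructor
  · rintro ⟨⟨hdisj, hmem⟩, hmax⟩
    refine ⟨hdisj, hmem, fun H hH hsub => ?_⟩
    have hFH : F ⊆ H := subset_union_right.trans hsub
    have hK : K = H \ F :=
      hmax _ ⟨sdiff_disjoint, by rwa [sdiff_union_of_subset hFH]⟩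
        (subset_sdiff.2 ⟨subset_union_left.trans hsub, hdisj⟩)
    rw [hK, sdiff_union_of_subset hFH]
  · rintro ⟨hdisj, hmem, hmax⟩
    refine ⟨⟨hdisj, hmem⟩, fun H ⟨hHF, hH⟩ hsub => ?_⟩
    have hunion := hmax _ hH (union_subset_union_left hsub)
    rw [← union_sdiff_cancel_right hdisj, hunion, union_sdiff_cancel_right hHF]

theorem sdiff_mem_facetsOf_linkC {F K : Finset V} (hK : K ∈ facetsOf Δ) (hFK : F ⊆ K) :
    K \ F ∈ facetsOf (linkC Δ F) :=
  mem_facetsOf_linkC_iff.2 ⟨sdiff_disjoint, by rwa [sdiff_union_of_subset hFK]⟩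

theorem IsPure.linkC (hΔ : IsPure Δ) (F : Finset V) : IsPure (linkC Δ F) := by
  intro K hK K' hK'
  rw [mem_facetsOf_linkC_iff] at hK hK'
  have hcard := hΔ _ hK.2 _ hK'.2
  rw [card_union_of_disjoint hK.1, card_union_of_disjoint hK'.1] at hcard
  omega

theorem FacetAdj.symm (hΔ : IsPure Δ) {A B : Finset V} (h : FacetAdj Δ A B) :
    FacetAdj Δ B A := by
  obtain ⟨hA, hB, hcard⟩ := h
  exact ⟨hB, hA, by rw [inter_comm, hcard, hΔ A hA B hB]⟩

theorem stronglyConnectedComplex_of_exchange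
    (h : ∀ A ∈ facetsOf Δ, ∀ B ∈ facetsOf Δ, ∀ x ∈ A, x ∉ B →
      ∃ A', FacetAdj Δ A A' ∧ (A' \ B).card < (A \ B).card) :
    StronglyConnectedComplex Δ := by
  intro A hA B hB
  induction hk : (A \ B).card using Nat.strong_induction_on generalizing A with
  | _ k ih =>
    by_cases hsub : A ⊆ B
    · rw [hA.2 B hB.1 hsub]
    · obtain ⟨x, hxA, hxB⟩ := not_subset.1 hsub
      obtain ⟨A', hAA', hlt⟩ := h A hA B hB x hxA hxB
      exact .head hAA' (ih _ (hk ▸ hlt) A' hAA'.2.1 rfl)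

theorem complexConnected_of_stronglyConnectedComplex [Finite V] (hΔ : IsComplex Δ)
    (hSC : StronglyConnectedComplex Δ) (hcard : ∀ K ∈ facetsOf Δ, 2 ≤ K.card) :
    ComplexConnected Δ := by
  have hface : ∀ K ∈ Δ, ∀ a ∈ K, ∀ b ∈ K,
      ReflTransGen (fun a b => a ≠ b ∧ ({a, b} : Finset V) ∈ Δ) a b := by
    intro K hK a ha b hb
    rcases eq_or_ne a b with rfl | hne
    · exact .refl
    · exact .single ⟨hne, hΔ K hK _ (insert_subset ha (singleton_subset_iff.2 hb))⟩
  intro u hu w hw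
  obtain ⟨A, hA, huA⟩ := exists_mem_facetsOf_superset hu
  obtain ⟨B, hB, hwB⟩ := exists_mem_facetsOf_superset hw
  have hchain : ∀ X, ReflTransGen (FacetAdj Δ) A X → ∀ x ∈ X,
      ReflTransGen (fun a b => a ≠ b ∧ ({a, b} : Finset V) ∈ Δ) u x := by
    intro X hX
    induction hX with
    | refl => exact hface A hA.1 u (singleton_subset_iff.1 huA)
    | @tail X Y _ hXY ih =>
      obtain ⟨hX, hY, hXYcard⟩ := hXY
      obtain ⟨z, hz⟩ : (X ∩ Y).Nonempty := card_pos.1 (by have := hcard X hX; omega)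
      exact fun y hy => (ih z (mem_of_mem_inter_left hz)).trans
        (hface _ hY.1 z (mem_of_mem_inter_right hz) y hy)
  exact hchain B (hSC A hA B hB) w (singleton_subset_iff.1 hwB)

theorem isS2_of_isPure [Finite V] (hΔ : IsComplex Δ) (hpure : IsPure Δ)
    (hSC : ∀ F ∈ Δ, StronglyConnectedComplex (linkC Δ F)) : IsS2 Δ := by
  rintro F hF ⟨H, hH, hH2⟩
  obtain ⟨K₀, hK₀, hHK₀⟩ := exists_mem_facetsOf_superset hH
  refine complexConnected_of_stronglyConnectedComplex (hΔ.linkC F) (hSC F hF) fun K hK => ?_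
  rw [hpure.linkC F K hK K₀ hK₀]
  exact hH2.trans (card_le_card hHK₀)

theorem not_stronglyConnectedComplex_of_split {P Q : Finset V} (hsplit : ∀ H ∈ Δ, H ⊆ P ∨ H ⊆ Q)
    (hPQ : Disjoint P Q) (hP : P ∈ Δ) (hQ : Q ∈ Δ) (hP2 : 2 ≤ P.card) (hQne : Q.Nonempty) :
    ¬ StronglyConnectedComplex Δ := by
  have hPf := mem_facetsOf_of_split hsplit hPQ hP (card_pos.1 (by omega))
  have hQf := mem_facetsOf_of_split (fun H hH => (hsplit H hH).symm) hPQ.symm hQ hQne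
  have hstuck : ∀ K, ReflTransGen (FacetAdj Δ) P K → K = P := by
    intro K hK
    induction hK with
    | refl => rfl
    | tail _ hstep ih =>
      rw [ih] at hstep
      obtain ⟨-, hK, hcard⟩ := hstep
      rcases hsplit _ hK.1 with h | h
      · exact hK.2 P hP h
      · rw [disjoint_iff_inter_eq_empty.1 (hPQ.mono_right h), card_empty] at hcard
        omega
  intro hSC
  obtain ⟨q, hq⟩ := hQne
  exact disjoint_left.1 hPQ (hstuck Q (hSC P hPf Q hQf) ▸ hq) hq

theorem not_complexConnected_of_split {P Q : Finset V} (hsplit : ∀ H ∈ Δ, H ⊆ P ∨ H ⊆ Q)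
    (hPQ : Disjoint P Q) {p q : V} (hp : p ∈ P) (hq : q ∈ Q) (hpΔ : {p} ∈ Δ)
    (hqΔ : {q} ∈ Δ) : ¬ ComplexConnected Δ := by
  intro hconn
  have hstay : ∀ x, ReflTransGen (fun a b => a ≠ b ∧ ({a, b} : Finset V) ∈ Δ) p x → x ∈ P := by
    intro x hx
    induction hx with
    | refl => exact hp
    | tail _ hab ha =>
      rcases hsplit _ hab.2 with h | h
      · exact h (mem_insert_of_mem (mem_singleton_self _))
      · exact absurd (h (mem_insert_self _ _)) (disjoint_left.1 hPQ ha)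
  exact disjoint_left.1 hPQ (hstay q (hconn p hpΔ q hqΔ)) hq

end Complexes

section Matching

variable {V : Type*} {G : SimpleGraph V} {σ : V → V}

theorem mem_indComplex_iff_of_adj_iff (hadj : ∀ x y, G.Adj x y ↔ y = σ x) {F : Finset V} :
    F ∈ IndComplex G ↔ ∀ x ∈ F, σ x ∉ F := by
  simp only [IndComplex, Set.mem_ofPred_eq, hadj]
  exact ⟨fun h x hx hσx => h x hx _ hσx rfl, fun h u hu v hv hvu => h u hu (hvu ▸ hv)⟩

variable [DecidableEq V]

theorem mem_facetsOf_indComplex_iff_of_adj_iff (hσ : Function.Involutive σ)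
    (hadj : ∀ x y, G.Adj x y ↔ y = σ x) {F : Finset V} :
    F ∈ facetsOf (IndComplex G) ↔ ∀ x, σ x ∈ F ↔ x ∉ F := by
  have hne : ∀ x, σ x ≠ x := fun x => (G.ne_of_adj ((hadj x (σ x)).2 rfl)).symm
  simp only [facetsOf, Set.mem_ofPred_eq, mem_indComplex_iff_of_adj_iff hadj]
  constructor
  · rintro ⟨hind, hmax⟩ x
    refine ⟨fun hσx hx => hind x hx hσx, fun hx => ?_⟩
    by_contra hσx
    have hins : ∀ y ∈ insert x F, σ y ∉ insert x F := by
      simp only [mem_insert, forall_eq_or_imp, not_or]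
      refine ⟨⟨hne x, hσx⟩, fun y hy => ⟨fun h => ?_, hind y hy⟩⟩
      exact hσx (by rw [← h, hσ y]; exact hy)
    exact hx ((hmax _ hins (subset_insert x F)) ▸ mem_insert_self x F)
  · intro h
    refine ⟨fun x hx hσx => (h x).1 hσx hx, fun H hH hFH => hFH.antisymm fun x hx => ?_⟩
    by_contra hxF
    exact hH x hx (hFH ((h x).2 hxF))

theorem two_mul_card_of_mem_facetsOf_of_adj_iff [Fintype V] (hσ : Function.Involutive σ)
    (hadj : ∀ x y, G.Adj x y ↔ y = σ x) {F : Finset V} (hF : F ∈ facetsOf (IndComplex G)) :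
    2 * F.card = Fintype.card V := by
  rw [mem_facetsOf_indComplex_iff_of_adj_iff hσ hadj] at hF
  have himage : F.image σ = Fᶜ := by
    ext x
    rw [mem_compl, ← hF, mem_image]
    exact ⟨fun ⟨a, ha, hax⟩ => by rwa [← hax, hσ a], fun h => ⟨σ x, h, hσ x⟩⟩
  have hcard := congrArg card himage
  rw [card_image_of_injective F hσ.injective, card_compl] at hcard
  have := card_le_univ F
  omega

theorem isPure_indComplex_of_adj_iff [Fintype V] (hσ : Function.Involutive σ)
    (hadj : ∀ x y, G.Adj x y ↔ y = σ x) : IsPure (IndComplex G) := fun A hA B hB => by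
  have hAcard := two_mul_card_of_mem_facetsOf_of_adj_iff hσ hadj hA
  have hBcard := two_mul_card_of_mem_facetsOf_of_adj_iff hσ hadj hB
  omega

theorem insert_erase_mem_facetsOf_of_adj_iff (hσ : Function.Involutive σ)
    (hadj : ∀ x y, G.Adj x y ↔ y = σ x) {K : Finset V} (hK : K ∈ facetsOf (IndComplex G))
    {x : V} (hx : x ∈ K) : insert (σ x) (K.erase x) ∈ facetsOf (IndComplex G) := by
  have hne : σ x ≠ x := (G.ne_of_adj ((hadj x (σ x)).2 rfl)).symm
  rw [mem_facetsOf_indComplex_iff_of_adj_iff hσ hadj] at hK ⊢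
  intro y
  have hσx : σ x ∉ K := fun h => (hK x).1 h hx
  have hσy : σ y = x ↔ y = σ x := ⟨fun h => h ▸ (hσ y).symm, fun h => h ▸ hσ x⟩
  simp only [mem_insert, mem_erase, hσ.injective.eq_iff, hK y]
  grind

theorem stronglyConnectedComplex_linkC_of_adj_iff (hσ : Function.Involutive σ)
    (hadj : ∀ x y, G.Adj x y ↔ y = σ x) (F : Finset V) :
    StronglyConnectedComplex (linkC (IndComplex G) F) := by
  refine stronglyConnectedComplex_of_exchange fun A hA B hB x hxA hxB => ?_
  obtain ⟨hAF, hAfacet⟩ := mem_facetsOf_linkC_iff.1 hA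
  obtain ⟨hBF, hBfacet⟩ := mem_facetsOf_linkC_iff.1 hB
  have hA' := (mem_facetsOf_indComplex_iff_of_adj_iff hσ hadj).1 hAfacet x
  have hB' := (mem_facetsOf_indComplex_iff_of_adj_iff hσ hadj).1 hBfacet x
  have hxF : x ∉ F := disjoint_left.1 hAF hxA
  -- `x` is swapped for its partner `σ x`, which must lie in `B`
  have hσxAF : σ x ∉ A ∪ F := fun h => hA'.1 h (mem_union_left F hxA)
  have hσxB : σ x ∈ B := by
    have := hB'.2 (by simp [hxB, hxF])
    simp only [mem_union] at hσxAF this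
    tauto
  refine ⟨insert (σ x) (A.erase x), ⟨hA, ?_, ?_⟩, ?_⟩
  · refine mem_facetsOf_linkC_iff.2 ⟨?_, ?_⟩
    · simp only [disjoint_left, mem_insert, mem_erase] at hAF hσxAF ⊢
      grind
    · have hswap := insert_erase_mem_facetsOf_of_adj_iff hσ hadj hAfacet (mem_union_left F hxA)
      convert hswap using 1
      ext y
      simp only [mem_union, mem_insert, mem_erase]
      grind
  · have hσxA : σ x ∉ A := fun h => hσxAF (mem_union_left F h)
    rw [inter_insert_of_notMem hσxA, inter_erase, inter_self, card_erase_of_mem hxA]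
  · have hsd : insert (σ x) (A.erase x) \ B = (A \ B).erase x := by
      ext y
      simp only [mem_sdiff, mem_insert, mem_erase]
      grind
    rw [hsd]
    exact card_erase_lt_of_mem (mem_sdiff.2 ⟨hxA, hxB⟩)

end Matching

theorem ZMod.val_sub_add_val {n : ℕ} [NeZero n] (x y : ZMod n) :
    (x - y).val + y.val = x.val ∨ (x - y).val + y.val = x.val + n := by
  rcases lt_or_ge ((x - y).val + y.val) n with h | h
  · left
    rw [← ZMod.val_add_of_lt h, sub_add_cancel]
  · right
    have := ZMod.val_add_of_le h
    rw [sub_add_cancel] at this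
    omega

/-- `p` and `q`, read on a cycle of length `n`, are at distance at most `d`. -/
def CircularlyClose (n d p q : ℕ) : Prop :=
  (p ≤ q + d ∧ q ≤ p + d) ∨ n + q ≤ d + p ∨ n + p ≤ d + q

def upperCirculant (n d : ℕ) : SimpleGraph (ZMod n) :=
  circulantGraph n (Set.Icc (d + 1) (n / 2))

section Circulant

variable {n d : ℕ}

def arc (n k : ℕ) (a : ZMod n) : Finset (ZMod n) :=
  (range (k + 1)).image fun i : ℕ => a + (i : ZMod n)

theorem card_arc {k : ℕ} (hk : k < n) (a : ZMod n) : (arc n k a).card = k + 1 := by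
  rw [arc, card_image_of_injOn, card_range]
  intro i hi j hj hij
  simp only [coe_range, Set.mem_Iio] at hi hj
  have := congrArg ZMod.val (add_left_cancel hij)
  rwa [ZMod.val_cast_of_lt (by omega), ZMod.val_cast_of_lt (by omega)] at this

variable [NeZero n]

theorem upperCirculant_not_adj_iff (x y : ZMod n) :
    ¬ (upperCirculant n d).Adj x y ↔ CircularlyClose n d x.val y.val := by
  have hxy := ZMod.val_sub_add_val x y
  have hyx := ZMod.val_sub_add_val y x
  have := (x - y).val_lt
  have := (y - x).val_lt
  rcases eq_or_ne x y with rfl | hne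
  · simp [upperCirculant, circulantGraph, CircularlyClose]
  · simp only [upperCirculant, circulantGraph, ne_eq, hne, not_false_eq_true, true_and,
      Set.mem_Icc, CircularlyClose]
    omega

theorem mem_indComplex_upperCirculant_iff {F : Finset (ZMod n)} :
    F ∈ IndComplex (upperCirculant n d) ↔
      ∀ u ∈ F, ∀ v ∈ F, CircularlyClose n d u.val v.val := by
  simp only [IndComplex, Set.mem_ofPred_eq, upperCirculant_not_adj_iff]

theorem mem_arc {k : ℕ} (hk : k < n) {a x : ZMod n} : x ∈ arc n k a ↔ (x - a).val ≤ k := by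
  simp only [arc, mem_image, mem_range, Nat.lt_succ_iff]
  constructor
  · rintro ⟨i, hi, rfl⟩
    rwa [add_sub_cancel_left, ZMod.val_cast_of_lt (by omega)]
  · exact fun h => ⟨(x - a).val, h, by rw [ZMod.natCast_zmod_val, add_sub_cancel]⟩

theorem mem_arc_natCast {a k : ℕ} (h : a + k < n) {x : ZMod n} :
    x ∈ arc n k (a : ZMod n) ↔ a ≤ x.val ∧ x.val ≤ a + k := by
  have hsub := ZMod.val_sub_add_val x a
  rw [ZMod.val_cast_of_lt (by omega)] at hsub
  have := (x - a).val_lt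
  rw [mem_arc (by omega)]
  omega

theorem arc_mem_indComplex (hd : d < n) (a : ZMod n) :
    arc n d a ∈ IndComplex (upperCirculant n d) := by
  rw [mem_indComplex_upperCirculant_iff]
  intro u hu v hv
  rw [mem_arc hd] at hu hv
  have := ZMod.val_sub_add_val u a
  have := ZMod.val_sub_add_val v a
  have := u.val_lt
  have := v.val_lt
  have := a.val_lt
  simp only [CircularlyClose]
  omega

end Circulant

section ThreeMulLt

variable {n d : ℕ} [NeZero n]

theorem exists_subset_arc_of_mem_indComplex (h3 : 3 * d < n) {F : Finset (ZMod n)}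
    (hF : F ∈ IndComplex (upperCirculant n d)) : ∃ a, F ⊆ arc n d a := by
  rw [mem_indComplex_upperCirculant_iff] at hF
  simp_rw [subset_iff, mem_arc (show d < n by omega)]
  rcases F.eq_empty_or_nonempty with rfl | ⟨u₀, hu₀⟩
  · exact ⟨0, by simp⟩
  by_cases hnear : ∀ x ∈ F, (x - u₀).val ≤ d
  · exact ⟨u₀, hnear⟩
  -- otherwise the arc starts at the element of `F` lying farthest behind `u₀`
  push Not at hnear
  obtain ⟨x₁, hx₁, hx₁d⟩ := hnear
  obtain ⟨u, hu, humin⟩ := exists_min_image (F.filter fun x => d < (x - u₀).val)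
    (fun x => (x - u₀).val) ⟨x₁, mem_filter.2 ⟨hx₁, hx₁d⟩⟩
  rw [mem_filter] at hu
  refine ⟨u, fun x hx => ?_⟩
  have hxu := hF x hx u hu.1
  have hxu₀ := hF x hx u₀ hu₀
  have huu₀ := hF u hu.1 u₀ hu₀
  have := ZMod.val_sub_add_val x u₀
  have := ZMod.val_sub_add_val u u₀
  have := ZMod.val_sub_add_val x u
  have := (x - u₀).val_lt
  have := (u - u₀).val_lt
  have := (x - u).val_lt
  have := x.val_lt
  have := u.val_lt
  simp only [CircularlyClose] at hxu hxu₀ huu₀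
  by_cases hxd : d < (x - u₀).val
  · have := humin x (mem_filter.2 ⟨hx, hxd⟩)
    omega
  · omega

theorem arc_mem_facetsOf (h3 : 3 * d < n) (a : ZMod n) :
    arc n d a ∈ facetsOf (IndComplex (upperCirculant n d)) := by
  refine ⟨arc_mem_indComplex (by omega) a, fun H hH hsub => ?_⟩
  obtain ⟨b, hb⟩ := exists_subset_arc_of_mem_indComplex h3 hH
  refine eq_of_subset_of_card_le hsub ?_
  rw [card_arc (by omega), ← card_arc (show d < n by omega) b]
  exact card_le_card hb

theorem exists_eq_arc_of_mem_facetsOf (h3 : 3 * d < n) {K : Finset (ZMod n)}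
    (hK : K ∈ facetsOf (IndComplex (upperCirculant n d))) : ∃ a, K = arc n d a := by
  obtain ⟨a, ha⟩ := exists_subset_arc_of_mem_indComplex h3 hK.1
  exact ⟨a, hK.2 _ (arc_mem_indComplex (by omega) a) ha⟩

theorem isPure_of_three_mul_lt (h3 : 3 * d < n) : IsPure (IndComplex (upperCirculant n d)) := by
  intro A hA B hB
  obtain ⟨a, rfl⟩ := exists_eq_arc_of_mem_facetsOf h3 hA
  obtain ⟨b, rfl⟩ := exists_eq_arc_of_mem_facetsOf h3 hB
  rw [card_arc (by omega), card_arc (by omega)]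

theorem arc_inter_arc_add_one {k : ℕ} (hk : k + 1 < n) (c : ZMod n) :
    arc n k c ∩ arc n k (c + 1) = (arc n k c).erase c := by
  ext x
  have hone : (1 : ZMod n).val = 1 := by rw [ZMod.val_one_eq_one_mod, Nat.mod_eq_of_lt (by omega)]
  have hsub := ZMod.val_sub_add_val (x - c) 1
  have hxc : x = c ↔ (x - c).val = 0 := by rw [ZMod.val_eq_zero, sub_eq_zero]
  have := ((x - c) - 1).val_lt
  rw [mem_inter, mem_erase, mem_arc (by omega), mem_arc (by omega), ← sub_sub, ne_eq, hxc]
  omega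

theorem subset_arc_add_of_le {k i : ℕ} (hk : k + d < n) {F : Finset (ZMod n)} {a : ZMod n}
    (ha : F ⊆ arc n d a) (hak : F ⊆ arc n d (a + k)) (hi : i ≤ k) : F ⊆ arc n d (a + i) := by
  intro x hx
  have hxa := (mem_arc (by omega)).1 (ha hx)
  have hxak := (mem_arc (by omega)).1 (hak hx)
  rw [mem_arc (by omega), ← sub_sub] at *
  have hk' := ZMod.val_sub_add_val (x - a) k
  have hi' := ZMod.val_sub_add_val (x - a) i
  rw [ZMod.val_cast_of_lt (by omega)] at hk' hi'
  have := (x - a - k).val_lt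
  have := (x - a - i).val_lt
  omega

theorem facetAdj_sdiff_arc_add_one (hn : 2 * d + 2 ≤ n) (h3 : 3 * d < n) {F : Finset (ZMod n)}
    {c : ZMod n} (hc : F ⊆ arc n d c) (hc1 : F ⊆ arc n d (c + 1)) :
    FacetAdj (linkC (IndComplex (upperCirculant n d)) F) (arc n d c \ F) (arc n d (c + 1) \ F) := by
  have hFc : F ⊆ (arc n d c).erase c :=
    arc_inter_arc_add_one (k := d) (by omega) c ▸ subset_inter hc hc1
  have hcF : c ∉ F := fun h => notMem_erase c _ (hFc h)
  have hcmem : c ∈ arc n d c \ F := mem_sdiff.2 ⟨(mem_arc (by omega)).2 (by simp), hcF⟩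
  have hint : (arc n d c \ F) ∩ (arc n d (c + 1) \ F) = (arc n d c \ F).erase c := by
    rw [← erase_sdiff_comm, ← arc_inter_arc_add_one (k := d) (by omega) c]
    ext x
    simp only [mem_inter, mem_sdiff]
    tauto
  refine ⟨sdiff_mem_facetsOf_linkC (arc_mem_facetsOf h3 c) hc,
    sdiff_mem_facetsOf_linkC (arc_mem_facetsOf h3 (c + 1)) hc1, ?_⟩
  rw [hint, card_erase_of_mem hcmem]

theorem reflTransGen_sdiff_arc (hn : 2 * d + 2 ≤ n) (h3 : 3 * d < n) {F : Finset (ZMod n)}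
    {a : ZMod n} :
    ∀ {k : ℕ}, (∀ i ≤ k, F ⊆ arc n d (a + i)) →
      ReflTransGen (FacetAdj (linkC (IndComplex (upperCirculant n d)) F))
        (arc n d a \ F) (arc n d (a + k) \ F)
  | 0, _ => by rw [Nat.cast_zero, add_zero]
  | k + 1, h => by
    have hstep := facetAdj_sdiff_arc_add_one hn h3 (h k k.le_succ) (by
      rw [add_assoc, ← Nat.cast_succ]; exact h (k + 1) le_rfl)
    rw [Nat.cast_succ, ← add_assoc]
    exact (reflTransGen_sdiff_arc hn h3 fun i hi => h i (hi.trans k.le_succ)).tail hstep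

theorem stronglyConnectedComplex_linkC_of_three_mul_lt (hn : 2 * d + 2 ≤ n) (h3 : 3 * d < n)
    (F : Finset (ZMod n)) :
    StronglyConnectedComplex (linkC (IndComplex (upperCirculant n d)) F) := by
  have : Std.Symm (FacetAdj (linkC (IndComplex (upperCirculant n d)) F)) :=
    ⟨fun _ _ h => h.symm ((isPure_of_three_mul_lt h3).linkC F)⟩
  have hfacet : ∀ K ∈ facetsOf (linkC (IndComplex (upperCirculant n d)) F),
      ∃ a, F ⊆ arc n d a ∧ K = arc n d a \ F := by
    intro K hK
    obtain ⟨hKF, hK⟩ := mem_facetsOf_linkC_iff.1 hK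
    obtain ⟨a, ha⟩ := exists_eq_arc_of_mem_facetsOf h3 hK
    exact ⟨a, ha ▸ subset_union_right, by rw [← ha, union_sdiff_cancel_right hKF]⟩
  intro A hA B hB
  show ReflTransGen (FacetAdj _) A B
  obtain ⟨a, haF, rfl⟩ := hfacet A hA
  obtain ⟨b, hbF, rfl⟩ := hfacet B hB
  rcases F.eq_empty_or_nonempty with rfl | ⟨x₀, hx₀⟩
  · have := reflTransGen_sdiff_arc hn h3 (F := ∅) (a := a) (k := (b - a).val)
      fun _ _ => empty_subset _
    rwa [ZMod.natCast_zmod_val, add_sub_cancel] at this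
  wlog hle : (x₀ - b).val ≤ (x₀ - a).val generalizing a b
  · exact symm (this b hbF hB a haF hA (le_of_not_ge hle))
  have hb : b = a + ((x₀ - a).val - (x₀ - b).val : ℕ) := by
    rw [Nat.cast_sub hle, ZMod.natCast_zmod_val, ZMod.natCast_zmod_val]
    ring
  have hk : (x₀ - a).val - (x₀ - b).val + d < n := by
    have := (mem_arc (show d < n by omega)).1 (haF hx₀)
    omega
  rw [hb] at hbF ⊢
  exact reflTransGen_sdiff_arc hn h3 fun i hi => subset_arc_add_of_le hk haF hbF hi

end ThreeMulLt

section TwoMulAddTwo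

variable {n d : ℕ}

theorem add_involutive_of_eq (hn : n = 2 * d + 2) :
    Function.Involutive (· + ((d + 1 : ℕ) : ZMod n)) := by
  intro x
  dsimp only
  rw [add_assoc, ← Nat.cast_add, show d + 1 + (d + 1) = n by omega, ZMod.natCast_self, add_zero]

theorem upperCirculant_adj_iff_of_eq [NeZero n] (hn : n = 2 * d + 2) (x y : ZMod n) :
    (upperCirculant n d).Adj x y ↔ y = x + ((d + 1 : ℕ) : ZMod n) := by
  have hc : ((d + 1 : ℕ) : ZMod n).val = d + 1 := ZMod.val_cast_of_lt (by omega)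
  rw [← sub_eq_iff_eq_add', ← (ZMod.val_injective n).eq_iff, hc, ← not_iff_not,
    upperCirculant_not_adj_iff]
  have := ZMod.val_sub_add_val y x
  have := (y - x).val_lt
  have := x.val_lt
  have := y.val_lt
  simp only [CircularlyClose]
  omega

end TwoMulAddTwo

theorem isPure_and_stronglyConnectedComplex_linkC {n d : ℕ} [NeZero n] (hn : 2 * d + 2 ≤ n)
    (h : 3 * d < n ∨ n = 2 * d + 2) :
    IsPure (IndComplex (upperCirculant n d)) ∧
      ∀ F, StronglyConnectedComplex (linkC (IndComplex (upperCirculant n d)) F) := by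
  rcases h with h3 | h2
  · exact ⟨isPure_of_three_mul_lt h3, stronglyConnectedComplex_linkC_of_three_mul_lt hn h3⟩
  · have hσ := add_involutive_of_eq h2
    have hadj := upperCirculant_adj_iff_of_eq h2
    exact ⟨isPure_indComplex_of_adj_iff hσ hadj, stronglyConnectedComplex_linkC_of_adj_iff hσ hadj⟩

section TwoMulAddThreeLe

variable {n d : ℕ}

def splitFace (n d : ℕ) : Finset (ZMod n) :=
  insert (d : ZMod n) (arc n (3 * d - n) 0)

def splitLinkArc (n d : ℕ) : Finset (ZMod n) :=
  arc n (n - 2 * d - 2) ((3 * d - n + 1 : ℕ) : ZMod n)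

theorem card_splitLinkArc (h1 : 2 * d + 3 ≤ n) : (splitLinkArc n d).card = n - 2 * d - 1 := by
  rw [splitLinkArc, card_arc (by omega)]
  omega

variable [NeZero n]

theorem mem_splitFace (h1 : 2 * d + 3 ≤ n) {x : ZMod n} :
    x ∈ splitFace n d ↔ x.val = d ∨ x.val ≤ 3 * d - n := by
  rw [splitFace, mem_insert, mem_arc (by omega), sub_zero, ← (ZMod.val_injective n).eq_iff,
    ZMod.val_cast_of_lt (by omega)]

theorem mem_splitLinkArc (h1 : 2 * d + 3 ≤ n) (h2 : n ≤ 3 * d) {x : ZMod n} :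
    x ∈ splitLinkArc n d ↔ 3 * d - n + 1 ≤ x.val ∧ x.val ≤ d - 1 := by
  rw [splitLinkArc, mem_arc_natCast (by omega)]
  omega

theorem splitLinkArc_mem_linkC (h1 : 2 * d + 3 ≤ n) (h2 : n ≤ 3 * d) :
    splitLinkArc n d ∈ linkC (IndComplex (upperCirculant n d)) (splitFace n d) := by
  have hunion : splitLinkArc n d ∪ splitFace n d = arc n d 0 := by
    ext x
    rw [mem_union, mem_splitLinkArc h1 h2, mem_splitFace h1, mem_arc (by omega), sub_zero]
    omega
  refine ⟨disjoint_left.2 fun x hx hx' => ?_, hunion ▸ arc_mem_indComplex (by omega) 0⟩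
  rw [mem_splitLinkArc h1 h2] at hx
  rw [mem_splitFace h1] at hx'
  omega

theorem singleton_mem_linkC_splitFace (h1 : 2 * d + 3 ≤ n) (h2 : n ≤ 3 * d) :
    {((2 * d : ℕ) : ZMod n)} ∈ linkC (IndComplex (upperCirculant n d)) (splitFace n d) := by
  have hval : ((2 * d : ℕ) : ZMod n).val = 2 * d := ZMod.val_cast_of_lt (by omega)
  refine ⟨disjoint_singleton_left.2 ?_, ?_⟩
  · rw [mem_splitFace h1, hval]
    omega
  · rw [mem_indComplex_upperCirculant_iff]
    intro u hu v hv
    rw [singleton_union, mem_insert, mem_splitFace h1, ← (ZMod.val_injective n).eq_iff,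
      hval] at hu hv
    simp only [CircularlyClose]
    omega

theorem mem_splitLinkArc_or_eq_of_singleton_mem_linkC (h1 : 2 * d + 3 ≤ n) (h2 : n ≤ 3 * d)
    {v : ZMod n} (hv : {v} ∈ linkC (IndComplex (upperCirculant n d)) (splitFace n d)) :
    v ∈ splitLinkArc n d ∨ v = ((2 * d : ℕ) : ZMod n) := by
  obtain ⟨hvF, hind⟩ := hv
  rw [disjoint_singleton_left, mem_splitFace h1] at hvF
  rw [mem_indComplex_upperCirculant_iff] at hind
  have hclose : ∀ j : ℕ, j = d ∨ j ≤ 3 * d - n → CircularlyClose n d v.val j := by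
    intro j hj
    have hjv : ((j : ℕ) : ZMod n).val = j := ZMod.val_cast_of_lt (by omega)
    have hjF : ((j : ℕ) : ZMod n) ∈ splitFace n d := by rw [mem_splitFace h1, hjv]; exact hj
    simpa only [hjv] using hind v (mem_union_left _ (mem_singleton_self v)) _
      (mem_union_right _ hjF)
  rw [mem_splitLinkArc h1 h2, ← (ZMod.val_injective n).eq_iff, ZMod.val_cast_of_lt (by omega)]
  have h0 := hclose 0 (by omega)
  have hd := hclose d (by omega)
  have := v.val_lt
  simp only [CircularlyClose] at h0 hd
  -- a vertex `v` with `n - d ≤ v < 2d` is too far from `v + d + 1 - n ∈ splitFace n d`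
  by_cases hv : n - d ≤ v.val ∧ v.val < 2 * d
  · have hj := hclose (v.val + d + 1 - n) (by omega)
    simp only [CircularlyClose] at hj
    omega
  · omega

theorem subset_or_subset_of_mem_linkC_splitFace (h1 : 2 * d + 3 ≤ n) (h2 : n ≤ 3 * d) :
    ∀ H ∈ linkC (IndComplex (upperCirculant n d)) (splitFace n d),
      H ⊆ splitLinkArc n d ∨ H ⊆ {((2 * d : ℕ) : ZMod n)} := by
  intro H hH
  have hvert : ∀ y ∈ H, y ∈ splitLinkArc n d ∨ y = ((2 * d : ℕ) : ZMod n) := fun y hy =>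
    mem_splitLinkArc_or_eq_of_singleton_mem_linkC h1 h2
      ((isComplex_indComplex _).linkC _ H hH {y} (singleton_subset_iff.2 hy))
  by_cases htop : ((2 * d : ℕ) : ZMod n) ∈ H
  · refine Or.inr fun y hy => mem_singleton.2 ((hvert y hy).resolve_left fun hyB => ?_)
    have hclose := (mem_indComplex_upperCirculant_iff.1 hH.2) _ (mem_union_left _ htop) y
      (mem_union_left _ hy)
    rw [mem_splitLinkArc h1 h2] at hyB
    rw [ZMod.val_cast_of_lt (by omega)] at hclose
    simp only [CircularlyClose] at hclose
    omega
  · exact Or.inl fun y hy => (hvert y hy).resolve_right fun h => htop (h ▸ hy)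

theorem disjoint_splitLinkArc_singleton (h1 : 2 * d + 3 ≤ n) (h2 : n ≤ 3 * d) :
    Disjoint (splitLinkArc n d) {((2 * d : ℕ) : ZMod n)} := by
  rw [disjoint_singleton_right, mem_splitLinkArc h1 h2, ZMod.val_cast_of_lt (by omega)]
  omega

theorem splitFace_mem_indComplex (h1 : 2 * d + 3 ≤ n) (h2 : n ≤ 3 * d) :
    splitFace n d ∈ IndComplex (upperCirculant n d) :=
  isComplex_indComplex _ _ (splitLinkArc_mem_linkC h1 h2).2 _ subset_union_right

theorem not_isS2_of_le (h1 : 2 * d + 3 ≤ n) (h2 : n ≤ 3 * d) :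
    ¬ IsS2 (IndComplex (upperCirculant n d)) := by
  have hB := splitLinkArc_mem_linkC h1 h2
  have hp : ((3 * d - n + 1 : ℕ) : ZMod n) ∈ splitLinkArc n d := by
    rw [mem_splitLinkArc h1 h2, ZMod.val_cast_of_lt (by omega)]
    omega
  intro hS2
  exact not_complexConnected_of_split (subset_or_subset_of_mem_linkC_splitFace h1 h2)
    (disjoint_splitLinkArc_singleton h1 h2) hp (mem_singleton_self _)
    ((isComplex_indComplex _).linkC _ _ hB _ (singleton_subset_iff.2 hp))
    (singleton_mem_linkC_splitFace h1 h2)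
    (hS2 _ (splitFace_mem_indComplex h1 h2) ⟨_, hB, by rw [card_splitLinkArc h1]; omega⟩)

theorem not_isPure_of_le (h1 : 2 * d + 3 ≤ n) (h2 : n ≤ 3 * d) :
    ¬ IsPure (IndComplex (upperCirculant n d)) := by
  have hsmall := mem_facetsOf_linkC_iff.1 <| mem_facetsOf_of_split
    (fun H hH => (subset_or_subset_of_mem_linkC_splitFace h1 h2 H hH).symm)
    (disjoint_splitLinkArc_singleton h1 h2).symm (singleton_mem_linkC_splitFace h1 h2)
    (singleton_nonempty _)
  obtain ⟨K, hK, hKarc⟩ :=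
    exists_mem_facetsOf_superset (arc_mem_indComplex (n := n) (d := d) (by omega) 0)
  intro hpure
  have hcard := hpure _ hsmall.2 _ hK
  have hle : ({((2 * d : ℕ) : ZMod n)} ∪ splitFace n d).card ≤ 3 * d - n + 3 := by
    rw [singleton_union, splitFace]
    refine (card_insert_le _ _).trans (Nat.succ_le_succ ((card_insert_le _ _).trans ?_))
    rw [card_arc (by omega)]
  have := card_le_card hKarc
  rw [card_arc (by omega)] at this
  omega

theorem exists_not_stronglyConnectedComplex_linkC_of_le (h1 : 2 * d + 3 ≤ n) (h2 : n ≤ 3 * d) :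
    ∃ F ∈ IndComplex (upperCirculant n d),
      ((∃ H ∈ linkC (IndComplex (upperCirculant n d)) F, 2 ≤ H.card) ∧
        ∀ H ∈ linkC (IndComplex (upperCirculant n d)) F, H.card ≤ d + 1) ∧
      ¬ StronglyConnectedComplex (linkC (IndComplex (upperCirculant n d)) F) := by
  have hB := splitLinkArc_mem_linkC h1 h2
  have hBcard := card_splitLinkArc h1
  refine ⟨splitFace n d, splitFace_mem_indComplex h1 h2,
    ⟨⟨_, hB, by omega⟩, fun H hH => ?_⟩,
    not_stronglyConnectedComplex_of_split (subset_or_subset_of_mem_linkC_splitFace h1 h2)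
      (disjoint_splitLinkArc_singleton h1 h2) hB (singleton_mem_linkC_splitFace h1 h2) (by omega)
      (singleton_nonempty _)⟩
  rcases subset_or_subset_of_mem_linkC_splitFace h1 h2 H hH with h | h
  · have := card_le_card h
    omega
  · have := card_le_card h
    rw [card_singleton] at this
    omega

end TwoMulAddThreeLe

theorem circulant_upper_S2_tfae_general (n d : ℕ) (hn : 2 * d + 2 ≤ n)
    (G : SimpleGraph (ZMod n)) (hG : G = circulantGraph n (Set.Icc (d + 1) (n / 2)))
    (Δ : Set (Finset (ZMod n))) (hΔ : Δ = IndComplex G) :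
    List.TFAE
      [GraphS2 G,
       WellCovered G,
       3 * d < n ∨ n = 2 * d + 2,
       ∀ F ∈ Δ,
         ((∃ H ∈ linkC Δ F, 2 ≤ H.card) ∧ (∀ H ∈ linkC Δ F, H.card ≤ d + 1)) →
           StronglyConnectedComplex (linkC Δ F)] := by
  subst hG hΔ
  have : NeZero n := ⟨by omega⟩
  have hgood := isPure_and_stronglyConnectedComplex_linkC (d := d) hn
  have hbad : ¬(3 * d < n ∨ n = 2 * d + 2) → 2 * d + 3 ≤ n ∧ n ≤ 3 * d := by omega
  tfae_have 3 → 1 := fun h =>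
    isS2_of_isPure (isComplex_indComplex _) (hgood h).1 fun F _ => (hgood h).2 F
  tfae_have 3 → 2 := fun h => (hgood h).1
  tfae_have 3 → 4 := fun h F _ _ => (hgood h).2 F
  tfae_have 1 → 3 := fun h1 => by_contra fun h => not_isS2_of_le (hbad h).1 (hbad h).2 h1
  tfae_have 2 → 3 := fun h2 => by_contra fun h => not_isPure_of_le (hbad h).1 (hbad h).2 h2
  tfae_have 4 → 3 := fun h4 => by_contra fun h => by
    obtain ⟨F, hF, hlink, hnot⟩ :=
      exists_not_stronglyConnectedComplex_linkC_of_le (hbad h).1 (hbad h).2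
    exact hnot (h4 F hF hlink)
  tfae_finish

/-- For `n ≥ 2d+2`, `d ≥ 1`, `G = C_n(d+1,…,⌊n/2⌋)` and `Δ = Ind(G)`, the following
are equivalent: (i) `G` is `S₂`; (ii) `G` is well-covered; (iii) `n > 3d` or `n = 2d+2`;
(iv) `link_Δ(F)` is strongly connected for all `F ∈ Δ` with `0 < dim link_Δ(F) ≤ d`. -/
theorem circulant_upper_S2_tfae (n d : ℕ) (hd : 1 ≤ d) (hn : 2 * d + 2 ≤ n)
    (G : SimpleGraph (ZMod n)) (hG : G = circulantGraph n (Set.Icc (d + 1) (n / 2)))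
    (Δ : Set (Finset (ZMod n))) (hΔ : Δ = IndComplex G) :
    List.TFAE
      [GraphS2 G,
       WellCovered G,
       3 * d < n ∨ n = 2 * d + 2,
       ∀ F ∈ Δ,
         ((∃ H ∈ linkC Δ F, 2 ≤ H.card) ∧ (∀ H ∈ linkC Δ F, H.card ≤ d + 1)) →
           StronglyConnectedComplex (linkC Δ F)] :=
  circulant_upper_S2_tfae_general n d hn G hG Δ hΔ
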